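/- Let ϑ ∈ {p, bp, r}, let A = (a_{m,n,k,l}) be a 4D complex matrix, and define the 4D matrix F by f_{m,n,k,l} = mn(a_{m,n,k,l} − a_{m+1,n,k,l} − a_{m,n+1,k,l} + a_{m+1,n+1,k,l}). If x ∈ Ω is such that for all m,n the series (Ax)_{m,n} = Σ_{k,l} a_{m,n,k,l} x_{k,l} exists (its rectangular partial sums are bounded and Pringsheim convergent), then for all m,n the series (Fx)_{m,n} = Σ_{k,l} f_{m,n,k,l} x_{k,l} also exists and equals mn·Δ^{11}(Ax)_{m,n} = mn((Ax)_{m,n} − (Ax)_{m+1,n} − (Ax)_{m,n+1} + (Ax)_{m+1,n+1}); consequently Ax ∈ H_ϑ if and only if Fx ∈ L_u and Ax is ϑ-convergent to 0. -/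

import Mathlib

open Filter Topology

noncomputable section

/-- The set `Ω` of all complex double sequences (0-indexed: entry `x k l`
corresponds to the paper's `x_{k+1,l+1}`). -/
abbrev DSeq : Type := ℕ → ℕ → ℂ

/-- The double (forward) difference operator `Δ`. -/
def dDiff (x : DSeq) (k l : ℕ) : ℂ :=
  x k l - x (k + 1) l - x k (l + 1) + x (k + 1) (l + 1)

/-- Pringsheim (p-) convergence of a double sequence to `L`. -/
def PConv (x : DSeq) (L : ℂ) : Prop :=
  ∀ ε > (0 : ℝ), ∃ N : ℕ, ∀ k ≥ N, ∀ l ≥ N, ‖x k l - L‖ < ε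

/-- Boundedness of a double sequence. -/
def DBounded (x : DSeq) : Prop :=
  ∃ M : ℝ, ∀ k l : ℕ, ‖x k l‖ ≤ M

/-- bp-convergence: bounded Pringsheim convergence. -/
def BPConv (x : DSeq) (L : ℂ) : Prop := PConv x L ∧ DBounded x

/-- r-convergence (regular convergence). -/
def RConv (x : DSeq) (L : ℂ) : Prop :=
  PConv x L ∧ (∀ k : ℕ, ∃ c : ℂ, Tendsto (fun l => x k l) atTop (nhds c)) ∧
    (∀ l : ℕ, ∃ c : ℂ, Tendsto (fun k => x k l) atTop (nhds c))

/-- The three convergence notions ϑ ∈ {p, bp, r}. -/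
inductive Theta | p | bp | r

/-- ϑ-convergence. -/
def ThConv : Theta → DSeq → ℂ → Prop
  | Theta.p => PConv
  | Theta.bp => BPConv
  | Theta.r => RConv

/-- `Σ_{k,l} kl |Δx_{k,l}| < ∞` (0-indexed, so the weight is `(k+1)(l+1)`). -/
def HahnSummable (x : DSeq) : Prop :=
  Summable (fun kl : ℕ × ℕ =>
    (((kl.1 + 1) * (kl.2 + 1) : ℕ) : ℝ) * ‖dDiff x kl.1 kl.2‖)

/-- The Hahn double sequence space `H_ϑ`. -/
def Hahn (θ : Theta) : Set DSeq := {x | HahnSummable x ∧ ThConv θ x 0}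

/-- `‖x‖_H = Σ_{k,l} kl |Δx_{k,l}|`. -/
def hNorm (x : DSeq) : ℝ :=
  ∑' kl : ℕ × ℕ, (((kl.1 + 1) * (kl.2 + 1) : ℕ) : ℝ) * ‖dDiff x kl.1 kl.2‖

/-- Rectangular partial sums of the products `a_{k,l} x_{k,l}`. -/
def pSum (a x : DSeq) (m n : ℕ) : ℂ :=
  ∑ k ∈ Finset.range (m + 1), ∑ l ∈ Finset.range (n + 1), a k l * x k l

/-- Rectangular partial sums of `a`. -/
def rectSum (a : DSeq) (m n : ℕ) : ℂ :=
  ∑ k ∈ Finset.range (m + 1), ∑ l ∈ Finset.range (n + 1), a k l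

/-- The space `P_∞`: `sup_{m,n} (1/(mn)) |Σ_{k≤m,l≤n} a_{k,l}| < ∞`. -/
def Pinf (a : DSeq) : Prop :=
  ∃ C : ℝ, ∀ m n : ℕ,
    (1 / (((m : ℝ) + 1) * ((n : ℝ) + 1))) * ‖rectSum a m n‖ ≤ C

/-- `L_u`: absolutely summable double sequences. -/
def Lu : Set DSeq := {x | Summable (fun kl : ℕ × ℕ => ‖x kl.1 kl.2‖)}

/-- `M_u`: bounded double sequences. -/
def Mu : Set DSeq := {x | DBounded x}

/-- `C_bp`: bp-convergent double sequences. -/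
def Cbp : Set DSeq := {x | ∃ L : ℂ, BPConv x L}

/-- The integrated space `∫L_u = {x : Σ_{k,l} kl |x_{k,l}| < ∞}`. -/
def intLu : Set DSeq :=
  {x | Summable (fun kl : ℕ × ℕ =>
    (((kl.1 + 1) * (kl.2 + 1) : ℕ) : ℝ) * ‖x kl.1 kl.2‖)}

/-- `BV`: double sequences of bounded variation. -/
def BVset : Set DSeq :=
  {x | Summable (fun kl : ℕ × ℕ => ‖dDiff x kl.1 kl.2‖)}

/-- The rectangular section `x^{[m,n]}`. -/
def sect (x : DSeq) (m n : ℕ) : DSeq :=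
  fun k l => if k ≤ m ∧ l ≤ n then x k l else 0

/-- `sup_{k,l ≥ N} |x_{k,l}|` valued in `ℝ≥0∞`. -/
def supTail (x : DSeq) (N : ℕ) : ENNReal :=
  ⨆ k : ℕ, ⨆ l : ℕ, if N ≤ k ∧ N ≤ l then (‖x k l‖₊ : ENNReal) else 0

/-- The seminorm on `H_p`: `Σ kl|Δx| + lim_N sup_{k,l≥N} |x_{k,l}|`
(the limit written as a limsup, which agrees with the limit whenever it exists). -/
def hpSemi (x : DSeq) : ℝ :=
  hNorm x + (Filter.limsup (supTail x) atTop).toReal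

/-- The element `d^{(k,l)}` of the determining set. -/
def dkl (k l : ℕ) : DSeq :=
  fun i j => if i ≤ k ∧ j ≤ l then (1 / (((k : ℂ) + 1) * ((l : ℂ) + 1))) else 0

/-- Finitely supported double sequences (the set `φ`). -/
def FinSupp (x : DSeq) : Prop :=
  ∃ M : ℕ, ∀ k l : ℕ, (M ≤ k ∨ M ≤ l) → x k l = 0

/-- A 4D matrix `B` belongs to the class `(X, Y)`: for every `x ∈ X` the rectangular
partial sums of every row are bounded and Pringsheim convergent, and the resulting
double sequence of limits `Bx` belongs to `Y`. -/
def MatDom (B : ℕ → ℕ → DSeq) (X Y : Set DSeq) : Prop :=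
  ∀ x ∈ X, ∃ y ∈ Y, ∀ m n : ℕ, BPConv (pSum (B m n) x) (y m n)

/-- The associated 4D matrix `E`, `e_{m,n,k,l} = (1/(kl)) Σ_{i≤k,j≤l} a_{m,n,i,j}`. -/
def Emat (A : ℕ → ℕ → DSeq) (m n : ℕ) : DSeq :=
  fun k l => (1 / (((k : ℂ) + 1) * ((l : ℂ) + 1))) * rectSum (A m n) k l

/-- The difference `Δ^{11}_{mn}` applied to the first pair of indices of a 4D matrix. -/
def d11 (A : ℕ → ℕ → DSeq) (m n k l : ℕ) : ℂ :=
  A m n k l - A (m + 1) n k l - A m (n + 1) k l + A (m + 1) (n + 1) k l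

/-! The partial sums of the rows of `F` are the combination
`mn (S_{m,n} - S_{m+1,n} - S_{m,n+1} + S_{m+1,n+1})` of the partial sums of the rows of `A`,
and bounded Pringsheim limits are linear. Since `|mn Δy_{m,n}| = mn |Δy_{m,n}|`, the summability
condition defining `H_ϑ` says exactly that `Fx = (mn Δy_{m,n})` lies in `L_u`. -/

theorem pConv_iff_tendsto (x : DSeq) (L : ℂ) :
    PConv x L ↔ Tendsto (fun p : ℕ × ℕ => x p.1 p.2) atTop (𝓝 L) := by
  rw [Metric.tendsto_atTop]
  constructor
  · intro h ε hε
    obtain ⟨N, hN⟩ := h ε hε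
    exact ⟨(N, N), fun p hp => by simpa [Complex.dist_eq] using hN p.1 hp.1 p.2 hp.2⟩
  · intro h ε hε
    obtain ⟨⟨N₁, N₂⟩, hN⟩ := h ε hε
    refine ⟨max N₁ N₂, fun k hk l hl => ?_⟩
    simpa [Complex.dist_eq] using hN (k, l) ⟨le_of_max_le_left hk, le_of_max_le_right hl⟩

section Linearity

variable {x y : DSeq} {L M : ℂ}

theorem PConv.add (hx : PConv x L) (hy : PConv y M) : PConv (x + y) (L + M) := by
  rw [pConv_iff_tendsto] at *
  exact hx.add hy

theorem PConv.sub (hx : PConv x L) (hy : PConv y M) : PConv (x - y) (L - M) := by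
  rw [pConv_iff_tendsto] at *
  exact hx.sub hy

theorem PConv.const_smul (c : ℂ) (hx : PConv x L) : PConv (c • x) (c * L) := by
  rw [pConv_iff_tendsto] at *
  exact hx.const_mul c

theorem DBounded.add (hx : DBounded x) (hy : DBounded y) : DBounded (x + y) := by
  obtain ⟨B, hB⟩ := hx
  obtain ⟨C, hC⟩ := hy
  exact ⟨B + C, fun k l => (norm_add_le _ _).trans (add_le_add (hB k l) (hC k l))⟩

theorem DBounded.sub (hx : DBounded x) (hy : DBounded y) : DBounded (x - y) := by
  obtain ⟨B, hB⟩ := hx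
  obtain ⟨C, hC⟩ := hy
  exact ⟨B + C, fun k l => (norm_sub_le _ _).trans (add_le_add (hB k l) (hC k l))⟩

theorem DBounded.const_smul (c : ℂ) (hx : DBounded x) : DBounded (c • x) := by
  obtain ⟨B, hB⟩ := hx
  refine ⟨‖c‖ * B, fun k l => ?_⟩
  simpa only [Pi.smul_apply, smul_eq_mul, norm_mul] using
    mul_le_mul_of_nonneg_left (hB k l) (norm_nonneg c)

theorem BPConv.add (hx : BPConv x L) (hy : BPConv y M) : BPConv (x + y) (L + M) :=
  ⟨hx.1.add hy.1, hx.2.add hy.2⟩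

theorem BPConv.sub (hx : BPConv x L) (hy : BPConv y M) : BPConv (x - y) (L - M) :=
  ⟨hx.1.sub hy.1, hx.2.sub hy.2⟩

theorem BPConv.const_smul (c : ℂ) (hx : BPConv x L) : BPConv (c • x) (c * L) :=
  ⟨hx.1.const_smul c, hx.2.const_smul c⟩

end Linearity

theorem pSum_const_mul_d11 (A : ℕ → ℕ → DSeq) (x : DSeq) (c : ℂ) (m n : ℕ) :
    pSum (fun k l => c * d11 A m n k l) x =
      c • (pSum (A m n) x - pSum (A (m + 1) n) x - pSum (A m (n + 1)) x
        + pSum (A (m + 1) (n + 1)) x) := by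
  funext M N
  simp only [pSum, d11, Pi.smul_apply, Pi.add_apply, Pi.sub_apply, smul_eq_mul, Finset.mul_sum,
    ← Finset.sum_sub_distrib, ← Finset.sum_add_distrib]
  refine Finset.sum_congr rfl fun k _ => Finset.sum_congr rfl fun l _ => ?_
  ring

theorem hahnSummable_iff_weighted_dDiff_mem_Lu (y : DSeq) :
    HahnSummable y ↔ (fun m n => ((((m + 1) * (n + 1) : ℕ)) : ℂ) * dDiff y m n) ∈ Lu := by
  simp only [HahnSummable, Lu, Set.mem_ofPred_eq, norm_mul, Complex.norm_natCast]

/-- with `f_{m,n,k,l} = mn Δ^{11}_{mn} a_{m,n,k,l}`, whenever all the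
series `(Ax)_{m,n}` exist (bounded Pringsheim-convergent partial sums, with values
`y m n`), the series `(Fx)_{m,n}` also exist and equal `mn·Δ^{11}(Ax)_{m,n}`;
consequently `Ax ∈ H_ϑ` iff `Fx ∈ L_u` and `Ax` is ϑ-convergent to `0`. -/
theorem statement_18 (θ : Theta) (A : ℕ → ℕ → DSeq) (x y : DSeq)
    (hy : ∀ m n : ℕ, BPConv (pSum (A m n) x) (y m n)) :
    (∀ m n : ℕ,
      BPConv (pSum (fun k l => ((((m + 1) * (n + 1) : ℕ)) : ℂ) * d11 A m n k l) x)
        (((((m + 1) * (n + 1) : ℕ)) : ℂ) * dDiff y m n)) ∧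
    (y ∈ Hahn θ ↔
      ((fun m n => ((((m + 1) * (n + 1) : ℕ)) : ℂ) * dDiff y m n) ∈ Lu ∧
        ThConv θ y 0)) := by
  refine ⟨fun m n => ?_, ?_⟩
  · rw [pSum_const_mul_d11]
    exact ((((hy m n).sub (hy (m + 1) n)).sub (hy m (n + 1))).add
      (hy (m + 1) (n + 1))).const_smul _
  · exact and_congr_left' (hahnSummable_iff_weighted_dDiff_mem_Lu y)
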